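/- In the ISCP dynamic-programming setting, suppose index j+1 exists, blk(j+1) = blk(j), and blk(j+1) ≥ 1 (i.e., S_{j+1} is not the first set of its block and a previous block exists); let k be the largest index with blk(k) = blk(j) − 1. Then for every W ⊆ α and b ∈ {1,2}: OPT(W, j+1, b) = min( 2 + OPT(W \ S_{j+1}, k, flag(blk(j) − 1)), OPT(W, j, b) ), where arithmetic is in ℕ ∪ {∞} with 2 + ∞ = ∞. -/

import Mathlib

/-! Solutions at `j + 1` either avoid `j + 1`, and are then exactly the solutions at `j`, or
contain it. In the latter case `j + 1` is the only chosen index of its block, so by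
monotonicity of `blk` every other chosen index lies in an earlier block, i.e. is at most `k`.
Removing `j + 1` is then a cost-preserving bijection (up to the `2` paid for `j + 1`) onto the
solutions for `W \ S (j + 1)` at `k`, whose flags are the original ones since only the flag of
block `blk j` was overridden. -/

/-- `OPTI S blk flag W j b` in the ISCP dynamic-programming setting: the infimum, over
all index sets `X ⊆ {i : i ≤ j}` covering `W`, containing at most one index from every
block `β_x` with `x ≤ blk j` and exactly one index from every such block whose (updated)
flag is `2`, of `2|X|` plus the number of blocks `β_x` (`x ≤ blk j`) with (updated) flag
`1` that `X` misses; here the flag of block `blk j` is overridden to be `b`.  The value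
is `∞` if no such `X` exists. -/
noncomputable def OPTI {α : Type*} [DecidableEq α] {m q : ℕ}
    (S : Fin m → Finset α) (blk : Fin m → Fin q) (flag : Fin q → ℕ)
    (W : Finset α) (j : Fin m) (b : ℕ) : ℕ∞ :=
  sInf { n : ℕ∞ | ∃ X : Finset (Fin m),
    (∀ i ∈ X, i ≤ j) ∧
    (W ⊆ X.biUnion S) ∧
    (∀ x : Fin q, x ≤ blk j → (X.filter (fun i => blk i = x)).card ≤ 1) ∧
    (∀ x : Fin q, x ≤ blk j → Function.update flag (blk j) b x = 2 →
      (X.filter (fun i => blk i = x)).card = 1) ∧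
    n = 2 * (X.card : ℕ∞) +
      ((Finset.univ.filter (fun x : Fin q =>
        x ≤ blk j ∧ Function.update flag (blk j) b x = 1 ∧
          ∀ i ∈ X, blk i ≠ x)).card : ℕ∞) }

theorem Monotone.le_iff_le_of_forall_eq_imp_le {ι κ : Type*} [LinearOrder ι]
    [PartialOrder κ] {g : ι → κ} (hg : Monotone g) {k : ι} (hk : ∀ i, g i = g k → i ≤ k)
    (i : ι) : i ≤ k ↔ g i ≤ g k :=
  ⟨fun h => hg h, fun h => le_of_not_gt fun hki => hki.not_ge (hk i (h.antisymm (hg hki.le)))⟩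

open Finset

namespace ISCP

variable {α : Type*} [DecidableEq α] {m q : ℕ} (S : Fin m → Finset α) (blk : Fin m → Fin q)
  (f : Fin q → ℕ)

-- The constraints and objective of `OPTI`, with the updated flags and the block bound `blk j`
-- made independent parameters `f` and `c`.
def IsFeasible (W : Finset α) (t : Fin m) (c : Fin q) (X : Finset (Fin m)) : Prop :=
  (∀ i ∈ X, i ≤ t) ∧ W ⊆ X.biUnion S ∧
    (∀ x ≤ c, #{i ∈ X | blk i = x} ≤ 1) ∧ (∀ x ≤ c, f x = 2 → #{i ∈ X | blk i = x} = 1)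

def cost (c : Fin q) (X : Finset (Fin m)) : ℕ∞ :=
  2 * #X + #{x | x ≤ c ∧ f x = 1 ∧ ∀ i ∈ X, blk i ≠ x}

theorem OPTI_eq_sInf_image_cost (W : Finset α) (j : Fin m) (b : ℕ) :
    OPTI S blk f W j b = sInf (cost blk (Function.update f (blk j) b) (blk j) ''
      {X | IsFeasible S blk (Function.update f (blk j) b) W j (blk j) X}) := by
  unfold OPTI IsFeasible cost
  congr 1
  ext n
  simp only [Set.mem_ofPred_eq, Set.mem_image, and_assoc, eq_comm (a := n)]

variable {S blk f}

theorem isFeasible_congr_flag {g : Fin q → ℕ} {W : Finset α} {t : Fin m} {c : Fin q}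
    {X : Finset (Fin m)} (hfg : ∀ x ≤ c, f x = g x) :
    IsFeasible S blk f W t c X ↔ IsFeasible S blk g W t c X := by
  unfold IsFeasible
  refine and_congr_right' (and_congr_right' (and_congr_right' ?_))
  exact forall₂_congr fun x hx => by rw [hfg x hx]

theorem cost_congr_flag {g : Fin q → ℕ} {c : Fin q} {X : Finset (Fin m)}
    (hfg : ∀ x ≤ c, f x = g x) : cost blk f c X = cost blk g c X := by
  unfold cost
  congr 3
  ext x
  simp only [mem_filter, mem_univ, true_and]
  exact and_congr_right fun hx => by rw [hfg x hx]

theorem IsFeasible.mono_index {W : Finset α} {t t' : Fin m} {c : Fin q} {X : Finset (Fin m)}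
    (hX : IsFeasible S blk f W t c X) (htt' : t ≤ t') : IsFeasible S blk f W t' c X :=
  ⟨fun i hi => (hX.1 i hi).trans htt', hX.2⟩

theorem IsFeasible.of_notMem_succ {W : Finset α} {t t' : Fin m} {c : Fin q}
    {X : Finset (Fin m)} (ht' : (t' : ℕ) = t + 1) (hX : IsFeasible S blk f W t' c X)
    (hnot : t' ∉ X) : IsFeasible S blk f W t c X := by
  refine ⟨fun i hi => ?_, hX.2⟩
  have hit' : i ≠ t' := ne_of_mem_of_not_mem hi hnot
  have := hX.1 i hi
  rw [Fin.le_def] at this ⊢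
  rw [Ne, Fin.ext_iff] at hit'
  omega

theorem IsFeasible.erase_top (hmono : Monotone blk) {W : Finset α} {t' k : Fin m} {c : Fin q}
    (hk : ∀ i, i ≤ k ↔ blk i < blk t') (hc : ∀ x, x ≤ c ↔ x < blk t') {X : Finset (Fin m)}
    (hX : IsFeasible S blk f W t' (blk t') X) (ht'X : t' ∈ X) :
    IsFeasible S blk f (W \ S t') k c (X.erase t') := by
  obtain ⟨hle, hcover, hatMost, hexact⟩ := hX
  have hfilter : ∀ x ≤ c, {i ∈ X.erase t' | blk i = x} = {i ∈ X | blk i = x} := fun x hx => by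
    rw [filter_erase, erase_eq_of_notMem]
    simpa only [mem_filter, not_and] using fun _ => ((hc x).1 hx).ne'
  refine ⟨fun i hi => ?_, fun w hw => ?_, fun x hx => ?_, fun x hx hfx => ?_⟩
  · obtain ⟨hit', hiX⟩ := mem_erase.1 hi
    have hblk_ne : blk i ≠ blk t' := fun heq =>
      absurd (hatMost (blk t') le_rfl) <| not_le.2 <| one_lt_card.2
        ⟨i, mem_filter.2 ⟨hiX, heq⟩, t', mem_filter.2 ⟨ht'X, rfl⟩, hit'⟩
    exact (hk i).2 ((hmono (hle i hiX)).lt_of_ne hblk_ne)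
  · obtain ⟨hwW, hwt'⟩ := mem_sdiff.1 hw
    obtain ⟨i, hiX, hwi⟩ := mem_biUnion.1 (hcover hwW)
    exact mem_biUnion.2 ⟨i, mem_erase.2 ⟨fun h => hwt' (h ▸ hwi), hiX⟩, hwi⟩
  · exact hfilter x hx ▸ hatMost x ((hc x).1 hx).le
  · exact hfilter x hx ▸ hexact x ((hc x).1 hx).le hfx

theorem IsFeasible.insert_top {W : Finset α} {t' k : Fin m} {c : Fin q}
    (hk : ∀ i, i ≤ k ↔ blk i < blk t') (hc : ∀ x, x ≤ c ↔ x < blk t') {Y : Finset (Fin m)}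
    (hY : IsFeasible S blk f (W \ S t') k c Y) :
    IsFeasible S blk f W t' (blk t') (insert t' Y) := by
  obtain ⟨hle, hcover, hatMost, hexact⟩ := hY
  have hkt' : k < t' := not_le.1 fun h => lt_irrefl _ ((hk t').1 h)
  have hblkY : ∀ i ∈ Y, blk i < blk t' := fun i hi => (hk i).1 (hle i hi)
  have htop : {i ∈ insert t' Y | blk i = blk t'} = {t'} := by
    rw [filter_insert, if_pos rfl, filter_eq_empty_iff.2 fun i hi => (hblkY i hi).ne]
    rfl
  have hbelow : ∀ x < blk t', {i ∈ insert t' Y | blk i = x} = {i ∈ Y | blk i = x} :=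
    fun x hx => by rw [filter_insert, if_neg hx.ne']
  refine ⟨fun i hi => ?_, fun w hw => ?_, fun x hx => ?_, fun x hx hfx => ?_⟩
  · rcases mem_insert.1 hi with rfl | hiY
    · exact le_rfl
    · exact (hle i hiY).trans hkt'.le
  · by_cases hwt' : w ∈ S t'
    · exact mem_biUnion.2 ⟨t', mem_insert_self _ _, hwt'⟩
    · obtain ⟨i, hiY, hwi⟩ := mem_biUnion.1 (hcover (mem_sdiff.2 ⟨hw, hwt'⟩))
      exact mem_biUnion.2 ⟨i, mem_insert_of_mem hiY, hwi⟩
  · rcases hx.lt_or_eq with hx | rfl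
    · exact hbelow x hx ▸ hatMost x ((hc x).2 hx)
    · simp [htop]
  · rcases hx.lt_or_eq with hx | rfl
    · exact hbelow x hx ▸ hexact x ((hc x).2 hx) hfx
    · simp [htop]

theorem cost_insert_top {t' : Fin m} {c : Fin q} (hc : ∀ x, x ≤ c ↔ x < blk t')
    {Y : Finset (Fin m)} (ht'Y : t' ∉ Y) :
    cost blk f (blk t') (insert t' Y) = 2 + cost blk f c Y := by
  have hblocks : #{x | x ≤ blk t' ∧ f x = 1 ∧ ∀ i ∈ insert t' Y, blk i ≠ x} =
      #{x | x ≤ c ∧ f x = 1 ∧ ∀ i ∈ Y, blk i ≠ x} := by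
    congr 1
    ext x
    simp only [mem_filter, mem_univ, true_and, forall_mem_insert, hc, lt_iff_le_and_ne]
    tauto
  rw [cost, cost, hblocks, card_insert_of_notMem ht'Y]
  push_cast
  ring

theorem setOf_isFeasible_succ (hmono : Monotone blk) {W : Finset α} {t t' k : Fin m}
    {c : Fin q} (ht' : (t' : ℕ) = t + 1) (hk : ∀ i, i ≤ k ↔ blk i < blk t')
    (hc : ∀ x, x ≤ c ↔ x < blk t') :
    {X | IsFeasible S blk f W t' (blk t') X} =
      insert t' '' {Y | IsFeasible S blk f (W \ S t') k c Y} ∪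
        {X | IsFeasible S blk f W t (blk t') X} := by
  have htt' : t ≤ t' := Fin.le_def.2 (by omega)
  ext X
  simp only [Set.mem_union, Set.mem_image, Set.mem_ofPred_eq]
  constructor
  · intro hX
    by_cases ht'X : t' ∈ X
    · exact .inl ⟨_, hX.erase_top hmono hk hc ht'X, insert_erase ht'X⟩
    · exact .inr (hX.of_notMem_succ ht' ht'X)
  · rintro (⟨Y, hY, rfl⟩ | hX)
    · exact hY.insert_top hk hc
    · exact hX.mono_index htt'

theorem sInf_cost_feasible_succ (hmono : Monotone blk) {W : Finset α} {t t' k : Fin m}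
    {c : Fin q} (ht' : (t' : ℕ) = t + 1) (hk : ∀ i, i ≤ k ↔ blk i < blk t')
    (hc : ∀ x, x ≤ c ↔ x < blk t') :
    sInf (cost blk f (blk t') '' {X | IsFeasible S blk f W t' (blk t') X}) =
      min (2 + sInf (cost blk f c '' {Y | IsFeasible S blk f (W \ S t') k c Y}))
        (sInf (cost blk f (blk t') '' {X | IsFeasible S blk f W t (blk t') X})) := by
  have hinsert : cost blk f (blk t') '' (insert t' '' {Y | IsFeasible S blk f (W \ S t') k c Y})
      = (2 + ·) '' (cost blk f c '' {Y | IsFeasible S blk f (W \ S t') k c Y}) := by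
    simp only [Set.image_image]
    exact Set.image_congr fun Y hY =>
      cost_insert_top hc fun ht'Y => lt_irrefl _ ((hk t').1 (hY.1 t' ht'Y))
  rw [setOf_isFeasible_succ hmono ht' hk hc, Set.image_union, sInf_union, hinsert,
    sInf_image, ENat.add_sInf]

end ISCP

theorem iscp_recurrence_same_block_general
    {α : Type*} [DecidableEq α] {m q : ℕ}
    (S : Fin m → Finset α) (blk : Fin m → Fin q)
    (hmono : Monotone blk)
    (flag : Fin q → ℕ)
    (j j' : Fin m) (hj' : (j' : ℕ) = (j : ℕ) + 1) (hblk : blk j' = blk j)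
    (hpos : 1 ≤ (blk j' : ℕ))
    (k : Fin m) (hk : (blk k : ℕ) = (blk j : ℕ) - 1)
    (hkmax : ∀ i : Fin m, (blk i : ℕ) = (blk j : ℕ) - 1 → i ≤ k)
    (W : Finset α) (b : ℕ) :
    OPTI S blk flag W j' b =
      min (2 + OPTI S blk flag (W \ S j') k (flag (blk k)))
        (OPTI S blk flag W j b) := by
  have hc : ∀ x, x ≤ blk k ↔ x < blk j' := fun x => by
    rw [Fin.le_def, Fin.lt_def]
    omega
  have hk' : ∀ i, i ≤ k ↔ blk i < blk j' := fun i => by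
    rw [hmono.le_iff_le_of_forall_eq_imp_le (fun i hi => hkmax i (by rw [hi, hk])), hc]
  have hflag_below : ∀ x ≤ blk k, flag x = Function.update flag (blk j') b x := fun x hx =>
    (Function.update_of_ne ((hc x).1 hx).ne _ _).symm
  simp only [ISCP.OPTI_eq_sInf_image_cost, Function.update_eq_self, ← hblk,
    ISCP.isFeasible_congr_flag hflag_below, ISCP.cost_congr_flag hflag_below]
  exact ISCP.sInf_cost_feasible_succ hmono hj' hk' hc

/-- ISCP recurrence when `S_{j+1}` is not the first set of its block and a
previous block exists; `k` is the largest index with `blk k = blk j − 1`.  For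
`b ∈ {1,2}`: `OPT(W, j+1, b) = min(2 + OPT(W \\ S_{j+1}, k, flag(blk j − 1)), OPT(W, j, b))`. -/
theorem iscp_recurrence_same_block
    {α : Type*} [DecidableEq α] {m q : ℕ} (hm : 0 < m) (hq : 0 < q)
    (S : Fin m → Finset α) (blk : Fin m → Fin q)
    (hmono : Monotone blk) (hsurj : Function.Surjective blk)
    (flag : Fin q → ℕ) (hflag : ∀ x, flag x = 1 ∨ flag x = 2)
    (j j' : Fin m) (hj' : (j' : ℕ) = (j : ℕ) + 1) (hblk : blk j' = blk j)
    (hpos : 1 ≤ (blk j' : ℕ))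
    (k : Fin m) (hk : (blk k : ℕ) = (blk j : ℕ) - 1)
    (hkmax : ∀ i : Fin m, (blk i : ℕ) = (blk j : ℕ) - 1 → i ≤ k)
    (W : Finset α) (b : ℕ) (hb : b = 1 ∨ b = 2) :
    OPTI S blk flag W j' b =
      min (2 + OPTI S blk flag (W \ S j') k (flag (blk k)))
        (OPTI S blk flag W j b) :=
  iscp_recurrence_same_block_general S blk hmono flag j j' hj' hblk hpos k hk hkmax W b
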